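/- arXiv:1709.08906 — 9 statements merged into one kernel-verified Lean document; each statement's English description precedes it below -/
import Mathlib

section
/- Stochastic H-Theorem (Theorem 1): Let U and U* be measure-preserving bijections of (Ω, μ) and T a time reversal such that U*(T(U(x))) = T(x) for every x ∈ Ω. Then for all measurable sets A, B with 0 < μ(A) < ∞ and 0 < μ(B) < ∞, the forward and backward transition probabilities satisfy μ(U(A) ∩ B)/μ(A) = exp(log μ(B) − log μ(A)) · μ(U*(T(B)) ∩ T(A))/μ(B); i.e., Pr(B|A) = e^{S_B(B) − S_B(A)} · Pr*(T(A)|T(B)), where S_B(A) = log μ(A) is the Boltzmann entropy. -/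
open MeasureTheory Set

/-!
`U*` maps `T(U(A) ∩ B)` onto `U*(T(B)) ∩ T(A)`, because `U* ∘ T ∘ U = T` and `T`, `U*` are
injective. Since `T` and `U*` preserve `μ`, the forward and backward transition sets therefore
have the same measure; dividing by `μ(A)` and `μ(B)` respectively gives the factor
`μ(B)/μ(A) = exp(log μ(B) − log μ(A))`.
-/

namespace MeasureTheory.MeasurePreserving

variable {α β : Type*} [MeasurableSpace α] [MeasurableSpace β] {μa : Measure α} {μb : Measure β}

theorem measure_image_equiv {e : α ≃ᵐ β} (he : MeasurePreserving e μa μb) (s : Set α) :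
    μb (e '' s) = μa s := by
  rw [e.image_eq_preimage_symm, (he.symm e).measure_preimage_equiv]

theorem measure_image_of_involutive {T : α → α} (hT : MeasurePreserving T μa μa)
    (hinv : Function.Involutive T) (s : Set α) : μa (T '' s) = μa s := by
  have hemb : MeasurableEmbedding T :=
    .of_measurable_inverse hT.measurable (hinv.surjective.range_eq ▸ .univ) hT.measurable
      hinv.leftInverse
  rw [hinv.image_eq_preimage_symm, hT.measure_preimage_emb hemb]

end MeasureTheory.MeasurePreserving

theorem measure_backward_transition_eq {Ω : Type*} [MeasurableSpace Ω] {μ : Measure Ω}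
    {U : Ω → Ω} {Ustar : Ω ≃ᵐ Ω} {T : Ω → Ω} (hUstar : MeasurePreserving Ustar μ μ)
    (hT : MeasurePreserving T μ μ) (hinv : Function.Involutive T)
    (hrev : ∀ x, Ustar (T (U x)) = T x) (A B : Set Ω) :
    μ (Ustar '' (T '' B) ∩ T '' A) = μ (U '' A ∩ B) := by
  have hset : Ustar '' (T '' (U '' A ∩ B)) = Ustar '' (T '' B) ∩ T '' A := by
    rw [image_inter hinv.injective, image_inter Ustar.injective, inter_comm]
    simp only [image_image, hrev]
  rw [← hset, hUstar.measure_image_equiv, hT.measure_image_of_involutive hinv]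

theorem Real.exp_log_sub_log_mul_div {a b : ℝ} (ha : 0 < a) (hb : 0 < b) (x : ℝ) :
    Real.exp (Real.log b - Real.log a) * (x / b) = x / a := by
  rw [Real.exp_sub, Real.exp_log ha, Real.exp_log hb]
  field_simp

theorem stochastic_H_theorem_general {Ω : Type*} [MeasurableSpace Ω]
    (μ : Measure Ω)
    (U Ustar : Ω ≃ᵐ Ω)
    (hUstar : MeasurePreserving Ustar μ μ)
    (T : Ω → Ω) (hT : MeasurePreserving T μ μ)
    (hTT : T ∘ T = id)
    (hrev : ∀ x, Ustar (T (U x)) = T x)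
    (A B : Set Ω)
    (hA0 : 0 < μ A) (hAfin : μ A < ⊤) (hB0 : 0 < μ B) (hBfin : μ B < ⊤) :
    (μ (U '' A ∩ B)).toReal / (μ A).toReal
      = Real.exp (Real.log (μ B).toReal - Real.log (μ A).toReal)
        * ((μ (Ustar '' (T '' B) ∩ T '' A)).toReal / (μ B).toReal) := by
  rw [measure_backward_transition_eq hUstar hT (congrFun hTT) hrev,
    Real.exp_log_sub_log_mul_div (ENNReal.toReal_pos hA0.ne' hAfin.ne)
      (ENNReal.toReal_pos hB0.ne' hBfin.ne)]

/-- **Stochastic H-Theorem** (Theorem 1): for measure-preserving bijections `U`, `Ustar`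
of `(Ω, μ)` and a time reversal `T` with `Ustar (T (U x)) = T x`, the forward and backward
transition probabilities between sets of finite positive measure satisfy
`Pr(B|A) = e^{S_B(B) − S_B(A)} · Pr*(T A | T B)`, where `S_B(A) = log μ(A)`. -/
theorem stochastic_H_theorem {Ω : Type*} [MeasurableSpace Ω]
    (μ : Measure Ω) [SigmaFinite μ]
    (U Ustar : Ω ≃ᵐ Ω) (hU : MeasurePreserving U μ μ)
    (hUstar : MeasurePreserving Ustar μ μ)
    (T : Ω → Ω) (hTmeas : Measurable T) (hT : MeasurePreserving T μ μ)
    (hTT : T ∘ T = id)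
    (hrev : ∀ x, Ustar (T (U x)) = T x)
    (A B : Set Ω) (hA : MeasurableSet A) (hB : MeasurableSet B)
    (hA0 : 0 < μ A) (hAfin : μ A < ⊤) (hB0 : 0 < μ B) (hBfin : μ B < ⊤) :
    (μ (U '' A ∩ B)).toReal / (μ A).toReal
      = Real.exp (Real.log (μ B).toReal - Real.log (μ A).toReal)
        * ((μ (Ustar '' (T '' B) ∩ T '' A)).toReal / (μ B).toReal) :=
  stochastic_H_theorem_general μ U Ustar hUstar T hT hTT hrev A B hA0 hAfin hB0 hBfin
end

section
/- Gibbs' inequality for an evolved Boltzmann state: Let 𝒫 be a Boltzmann partition of Ω, U a measure-preserving bijection, and A ∈ 𝒫. Assume the series Σ_{B∈𝒫} |Pr(B|A) log(Pr(B|A)/μ(B))| converges, where Pr(B|A) = μ(U(A) ∩ B)/μ(A). Then the coarse-grained Gibbs entropy of the evolved Boltzmann state satisfies S_G[C(ρ_A ∘ U⁻¹)] ≥ log μ(A) = S_G[ρ_A]. -/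
/-!
Since `U` preserves `μ`, `ρ_A ∘ U⁻¹ = ρ_{U(A)}`, so it suffices that coarse-graining the uniform
density `ρ_S` of a set `S` cannot push its entropy below `log μ(S)`. The coarse-grained state is
the step function equal to `p_B / μ(B)` on each cell `B`, where the weights `p_B = μ(S ∩ B) / μ(S)`
sum to `1`; its entropy is `-Σ_B p_B log (p_B / μ(B))`, and `μ(S ∩ B) ≤ μ(B)` bounds every
`log (p_B / μ(B))` by `-log μ(S)`.
-/

open MeasureTheory Set

/-- The coarse-graining of a function `f` with respect to the partition `P`:
`(Cf)(x) = Σ_{B∈𝒫} (∫_B f dμ / μ(B)) χ_B(x)`. -/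
noncomputable def coarseGrain {Ω : Type*} [MeasurableSpace Ω]
    (μ : Measure Ω) (P : ℕ → Set Ω) (f : Ω → ℝ) : Ω → ℝ :=
  fun x => ∑' n, Set.indicator (P n)
    (fun _ => (∫ y in P n, f y ∂μ) / (μ (P n)).toReal) x

/-- The Boltzmann state of a cell `A`: the probability density `ρ_A = χ_A / μ(A)`. -/
noncomputable def boltzmannState {Ω : Type*} [MeasurableSpace Ω]
    (μ : Measure Ω) (A : Set Ω) : Ω → ℝ :=
  Set.indicator A (fun _ => ((μ A).toReal)⁻¹)

/-- The Gibbs entropy `S_G[ρ] = −∫ ρ log ρ dμ` (with `0 · log 0 = 0`). -/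
noncomputable def gibbsEntropy {Ω : Type*} [MeasurableSpace Ω]
    (μ : Measure Ω) (ρ : Ω → ℝ) : ℝ :=
  - ∫ x, ρ x * Real.log (ρ x) ∂μ

section GibbsEntropy

open Real Function

lemma tsum_mul_log_le_log {ι : Type*} {p q : ι → ℝ} {M : ℝ} (hp : HasSum p 1)
    (hp_nonneg : ∀ i, 0 ≤ p i) (hs : Summable fun i => p i * log (q i))
    (hq : ∀ i, 0 < p i → 0 < q i ∧ q i ≤ M) :
    ∑' i, p i * log (q i) ≤ log M := by
  have hterm : ∀ i, p i * log (q i) ≤ p i * log M := by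
    intro i
    rcases (hp_nonneg i).eq_or_lt with hzero | hpos
    · simp [← hzero]
    · obtain ⟨hq_pos, hq_le⟩ := hq i hpos
      exact mul_le_mul_of_nonneg_left (log_le_log hq_pos hq_le) hpos.le
  calc ∑' i, p i * log (q i) ≤ ∑' i, p i * log M :=
        hs.tsum_le_tsum hterm (hp.summable.mul_right _)
    _ = log M := by rw [tsum_mul_right, hp.tsum_eq, one_mul]

lemma MeasureTheory.MeasurePreserving.measure_image_equiv_s6
    {α β : Type*} [MeasurableSpace α] [MeasurableSpace β] {μa : Measure α} {μb : Measure β}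
    {f : α ≃ᵐ β} (hf : MeasurePreserving f μa μb) (s : Set α) :
    μb (f '' s) = μa s := by
  rw [f.image_eq_preimage_symm]
  exact (hf.symm f).measure_preimage_equiv s

section Partition

variable {α ι : Type*} {P : ι → Set α}

lemma tsum_indicator_const_apply_of_mem (hP : Pairwise (Disjoint on P)) {x : α} {k : ι}
    (hx : x ∈ P k) (c : ι → ℝ) :
    ∑' n, (P n).indicator (fun _ => c n) x = c k := by
  refine (tsum_eq_single k fun n hn => indicator_of_notMem ?_ _).trans (indicator_of_mem hx _)
  exact fun hxn => disjoint_left.mp (hP hn) hxn hx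

lemma comp_tsum_indicator_const (hP : Pairwise (Disjoint on P)) (hcover : ⋃ n, P n = univ)
    (φ : ℝ → ℝ) (c : ι → ℝ) (x : α) :
    φ (∑' n, (P n).indicator (fun _ => c n) x) = ∑' n, (P n).indicator (fun _ => φ (c n)) x := by
  obtain ⟨k, hk⟩ := mem_iUnion.mp (hcover ▸ mem_univ x)
  rw [tsum_indicator_const_apply_of_mem hP hk, tsum_indicator_const_apply_of_mem hP hk]

end Partition

variable {Ω : Type*} [MeasurableSpace Ω] {μ : Measure Ω}

section CountablePartition

variable {ι : Type*} [Countable ι] {P : ι → Set Ω}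

lemma integral_tsum_indicator_const (hPmeas : ∀ n, MeasurableSet (P n))
    (hPfin : ∀ n, μ (P n) ≠ ⊤) {c : ι → ℝ} (hs : Summable fun n => |c n| * μ.real (P n)) :
    ∫ x, ∑' n, (P n).indicator (fun _ => c n) x ∂μ = ∑' n, c n * μ.real (P n) := by
  have hlintegral : ∀ n, ∫⁻ x, ‖(P n).indicator (fun _ => c n) x‖ₑ ∂μ
      = ENNReal.ofReal (|c n| * μ.real (P n)) := by
    intro n
    simp only [enorm_indicator_eq_indicator_enorm]
    rw [lintegral_indicator_const (hPmeas n), ENNReal.ofReal_mul (abs_nonneg _),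
      ofReal_measureReal (hPfin n), Real.enorm_eq_ofReal_abs]
  have hfinite : ∑' n, ∫⁻ x, ‖(P n).indicator (fun _ => c n) x‖ₑ ∂μ ≠ ⊤ := by
    simp only [hlintegral]
    rw [← ENNReal.ofReal_tsum_of_nonneg (fun n => by positivity) hs]
    exact ENNReal.ofReal_ne_top
  rw [integral_tsum (fun n => (stronglyMeasurable_const.indicator (hPmeas n)).aestronglyMeasurable)
    hfinite]
  congr 1 with n
  rw [integral_indicator_const _ (hPmeas n), smul_eq_mul, mul_comm]

lemma gibbsEntropy_tsum_indicator_const (hPmeas : ∀ n, MeasurableSet (P n))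
    (hPdisj : Pairwise (Disjoint on P)) (hPcover : ⋃ n, P n = univ) (hPfin : ∀ n, μ (P n) ≠ ⊤)
    {c : ι → ℝ} (hs : Summable fun n => |c n * log (c n)| * μ.real (P n)) :
    gibbsEntropy μ (fun x => ∑' n, (P n).indicator (fun _ => c n) x)
      = -∑' n, c n * log (c n) * μ.real (P n) := by
  simp only [gibbsEntropy, comp_tsum_indicator_const hPdisj hPcover (fun t => t * log t)]
  rw [integral_tsum_indicator_const hPmeas hPfin hs]

lemma hasSum_measureReal_inter (hPmeas : ∀ n, MeasurableSet (P n))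
    (hPdisj : Pairwise (Disjoint on P)) (hPcover : ⋃ n, P n = univ) {S : Set Ω}
    (hS : MeasurableSet S) (hSfin : μ S ≠ ⊤) :
    HasSum (fun n => μ.real (S ∩ P n)) (μ.real S) := by
  have hsum : ∑' n, μ (S ∩ P n) = μ S := by
    rw [← measure_iUnion (fun i j hij => (hPdisj hij).mono inter_subset_right inter_subset_right)
      (fun n => hS.inter (hPmeas n)), ← inter_iUnion, hPcover, inter_univ]
  have hfin : ∀ n, μ (S ∩ P n) ≠ ⊤ := fun n => measure_ne_top_of_subset inter_subset_left hSfin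
  have h := ENNReal.hasSum_toReal (hsum ▸ hSfin)
  rwa [← ENNReal.tsum_toReal_eq hfin, hsum] at h

end CountablePartition

lemma gibbsEntropy_boltzmannState {A : Set Ω} (hA : MeasurableSet A) :
    gibbsEntropy μ (boltzmannState μ A) = log (μ.real A) := by
  have hpointwise : (fun x => boltzmannState μ A x * log (boltzmannState μ A x))
      = A.indicator fun _ => (μ.real A)⁻¹ * log (μ.real A)⁻¹ := by
    ext x
    by_cases hx : x ∈ A <;> simp [boltzmannState, hx, measureReal_def]
  rw [gibbsEntropy, hpointwise, integral_indicator_const _ hA, smul_eq_mul, log_inv]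
  rcases eq_or_ne (μ.real A) 0 with hzero | hne
  · simp [hzero]
  · field_simp

lemma setIntegral_boltzmannState {A : Set Ω} (hA : MeasurableSet A) (B : Set Ω) :
    ∫ x in B, boltzmannState μ A x ∂μ = μ.real (A ∩ B) / μ.real A := by
  rw [boltzmannState, integral_indicator_const _ hA, measureReal_restrict_apply hA, smul_eq_mul,
    div_eq_mul_inv]
  rfl

lemma coarseGrain_boltzmannState (P : ℕ → Set Ω) {A : Set Ω} (hA : MeasurableSet A) :
    coarseGrain μ P (boltzmannState μ A)
      = fun x => ∑' n, (P n).indicator (fun _ => μ.real (A ∩ P n) / μ.real A / μ.real (P n)) x := by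
  unfold coarseGrain
  simp only [setIntegral_boltzmannState hA]
  rfl

lemma boltzmannState_comp_symm {U : Ω ≃ᵐ Ω} (hU : MeasurePreserving U μ μ) (A : Set Ω) :
    (fun x => boltzmannState μ A (U.symm x)) = boltzmannState μ (U '' A) := by
  rw [boltzmannState, boltzmannState, hU.measure_image_equiv_s6, U.image_eq_preimage_symm]
  rfl

theorem log_measureReal_le_gibbsEntropy_coarseGrain_boltzmannState {P : ℕ → Set Ω}
    (hPmeas : ∀ n, MeasurableSet (P n)) (hPdisj : Pairwise (Disjoint on P))
    (hPcover : ⋃ n, P n = univ) (hPfin : ∀ n, μ (P n) ≠ ⊤) {S : Set Ω} (hS : MeasurableSet S)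
    (hsum : Summable fun n =>
      |μ.real (S ∩ P n) / μ.real S * log (μ.real (S ∩ P n) / μ.real S / μ.real (P n))|) :
    log (μ.real S) ≤ gibbsEntropy μ (coarseGrain μ P (boltzmannState μ S)) := by
  rcases (measureReal_nonneg (μ := μ) (s := S)).eq_or_lt with hzero | hpos
  · -- `μ.real S = 0` (also when `μ S = ∞`) makes `ρ_S = 0`, so both sides vanish
    simp [coarseGrain_boltzmannState P hS, gibbsEntropy, ← hzero]
  have hSfin : μ S ≠ ⊤ := (ENNReal.toReal_pos_iff.mp hpos).2.ne
  have hle : ∀ n, μ.real (S ∩ P n) ≤ μ.real (P n) :=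
    fun n => measureReal_mono inter_subset_right (hPfin n)
  obtain ⟨p, hp⟩ : ∃ p : ℕ → ℝ, ∀ n, p n = μ.real (S ∩ P n) / μ.real S := ⟨_, fun _ => rfl⟩
  obtain ⟨c, hc⟩ : ∃ c : ℕ → ℝ, ∀ n, c n = p n / μ.real (P n) := ⟨_, fun _ => rfl⟩
  simp only [← hp, ← hc] at hsum
  have hmass : ∀ n, c n * μ.real (P n) = p n := fun n => by
    refine hc n ▸ div_mul_cancel_of_imp fun h => ?_
    rw [hp, le_antisymm (h ▸ hle n) measureReal_nonneg, zero_div]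
  have hprob : HasSum p 1 := by
    simpa only [← hp, div_self hpos.ne'] using
      (hasSum_measureReal_inter hPmeas hPdisj hPcover hS hSfin).div_const (μ.real S)
  have hentropy : gibbsEntropy μ (coarseGrain μ P (boltzmannState μ S))
      = -∑' n, p n * log (c n) := by
    simp only [coarseGrain_boltzmannState P hS, ← hp, ← hc]
    rw [gibbsEntropy_tsum_indicator_const hPmeas hPdisj hPcover hPfin]
    · simp only [mul_right_comm _ (log _), hmass]
    · refine hsum.congr fun n => ?_
      rw [← abs_of_nonneg (measureReal_nonneg (μ := μ) (s := P n)), ← abs_mul, mul_right_comm,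
        hmass]
  rw [hentropy, le_neg, ← log_inv]
  refine tsum_mul_log_le_log hprob (fun n => hp n ▸ by positivity) hsum.of_abs
    fun n hpn => ⟨?_, ?_⟩
  · have hcell : 0 < μ.real (S ∩ P n) := (div_pos_iff_of_pos_right hpos).mp (hp n ▸ hpn)
    exact hc n ▸ div_pos hpn (hcell.trans_le (hle n))
  · calc c n = μ.real (S ∩ P n) / μ.real (P n) / μ.real S := by rw [hc, hp, div_right_comm]
      _ ≤ 1 / μ.real S := by gcongr; exact div_le_one_of_le₀ (hle n) measureReal_nonneg
      _ = (μ.real S)⁻¹ := one_div _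

end GibbsEntropy

theorem gibbs_inequality_evolved_boltzmannState_general {Ω : Type*} [MeasurableSpace Ω]
    (μ : Measure Ω)
    (P : ℕ → Set Ω) (hPmeas : ∀ n, MeasurableSet (P n))
    (hPdisj : Pairwise (Function.onFun Disjoint P)) (hPcover : (⋃ n, P n) = Set.univ)
    (hPfin : ∀ n, μ (P n) < ⊤)
    (U : Ω ≃ᵐ Ω) (hU : MeasurePreserving U μ μ) (a : ℕ)
    (hsum : Summable (fun n =>
      |((μ (U '' P a ∩ P n)).toReal / (μ (P a)).toReal)
        * Real.log (((μ (U '' P a ∩ P n)).toReal / (μ (P a)).toReal)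
            / (μ (P n)).toReal)|)) :
    Real.log (μ (P a)).toReal
        ≤ gibbsEntropy μ (coarseGrain μ P (fun x => boltzmannState μ (P a) (U.symm x)))
      ∧ Real.log (μ (P a)).toReal = gibbsEntropy μ (boltzmannState μ (P a)) := by
  have himage := hU.measure_image_equiv_s6 (P a)
  refine ⟨?_, (gibbsEntropy_boltzmannState (hPmeas a)).symm⟩
  rw [boltzmannState_comp_symm hU]
  have h := log_measureReal_le_gibbsEntropy_coarseGrain_boltzmannState hPmeas hPdisj hPcover
    (fun n => (hPfin n).ne) (U.measurableSet_image.mpr (hPmeas a))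
    (by simpa only [measureReal_def, himage] using hsum)
  simpa only [measureReal_def, himage] using h

/-- Gibbs' inequality for an evolved Boltzmann state: for a Boltzmann partition `P`,
a measure-preserving bijection `U` and a cell `A = P a`, assuming the series
`Σ_B |Pr(B|A) log(Pr(B|A)/μ(B))|` converges, the coarse-grained Gibbs entropy of the
evolved Boltzmann state satisfies `S_G[C(ρ_A ∘ U⁻¹)] ≥ log μ(A) = S_G[ρ_A]`. -/
theorem gibbs_inequality_evolved_boltzmannState {Ω : Type*} [MeasurableSpace Ω]
    (μ : Measure Ω) [SigmaFinite μ]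
    (P : ℕ → Set Ω) (hPmeas : ∀ n, MeasurableSet (P n))
    (hPdisj : Pairwise (Function.onFun Disjoint P)) (hPcover : (⋃ n, P n) = Set.univ)
    (hPpos : ∀ n, 0 < μ (P n)) (hPfin : ∀ n, μ (P n) < ⊤)
    (U : Ω ≃ᵐ Ω) (hU : MeasurePreserving U μ μ) (a : ℕ)
    (hsum : Summable (fun n =>
      |((μ (U '' P a ∩ P n)).toReal / (μ (P a)).toReal)
        * Real.log (((μ (U '' P a ∩ P n)).toReal / (μ (P a)).toReal)
            / (μ (P n)).toReal)|)) :
    Real.log (μ (P a)).toReal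
        ≤ gibbsEntropy μ (coarseGrain μ P (fun x => boltzmannState μ (P a) (U.symm x)))
      ∧ Real.log (μ (P a)).toReal = gibbsEntropy μ (boltzmannState μ (P a)) :=
  gibbs_inequality_evolved_boltzmannState_general μ P hPmeas hPdisj hPcover hPfin U hU a hsum
end

section
/- Second Law of Thermodynamics (Theorem 2, locally mixing dynamics): Let 𝒫 be a Boltzmann partition of Ω, let (U_k)_{k≥0} be measure-preserving bijections of (Ω, μ), and let (f_k)_{k≥0} be probability densities satisfying the local-mixing evolution law f_{k+1} = C(f_k ∘ U_k⁻¹) for all k. Assume for each k that f_k log f_k is μ-integrable and that Σ_{B∈𝒫} |p_k(B) log(p_k(B)/μ(B))| < ∞, where p_k(B) = ∫_B f_k dμ. Then the coarse-grained Gibbs entropy is monotonically non-decreasing: S_G[f_{k+1}] ≥ S_G[f_k] for every k. -/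
open MeasureTheory Set

/-!
Transport by a measure-preserving bijection does not change the Gibbs entropy, so it suffices
to show that coarse-graining does not decrease it. On a cell `B` the coarse-grained density is
the constant `⨍_B f`, and Jensen's inequality for the convex function `t ↦ t log t` gives
`μ(B) · (⨍_B f) log (⨍_B f) ≤ ∫_B f log f`; summing over the cells gives the claim.
-/

open Real

section

variable {α β : Type*} [MeasurableSpace α] [MeasurableSpace β] {μ : Measure α}

theorem gibbsEntropy_comp_measurePreserving {ν : Measure β} {e : α ≃ᵐ β}
    (he : MeasurePreserving e μ ν) (f : β → ℝ) :
    gibbsEntropy μ (fun x => f (e x)) = gibbsEntropy ν f := by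
  rw [gibbsEntropy, gibbsEntropy, he.integral_comp' (fun y => f y * log (f y))]

theorem measureReal_mul_mul_log_setAverage_le {s : Set α} (hs0 : μ s ≠ 0) (hs : μ s ≠ ⊤)
    {f : α → ℝ} (hf0 : ∀ᵐ x ∂μ.restrict s, 0 ≤ f x) (hf : IntegrableOn f s μ)
    (hflog : IntegrableOn (fun x => f x * log (f x)) s μ) :
    μ.real s * ((⨍ x in s, f x ∂μ) * log (⨍ x in s, f x ∂μ))
      ≤ ∫ x in s, f x * log (f x) ∂μ := by
  have hjensen := convexOn_mul_log.map_set_average_le continuous_mul_log.continuousOn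
    isClosed_Ici hs0 hs hf0 hf hflog
  have hμs : 0 < μ.real s := ENNReal.toReal_pos hs0 hs
  calc μ.real s * ((⨍ x in s, f x ∂μ) * log (⨍ x in s, f x ∂μ))
      ≤ μ.real s * ⨍ x in s, f x * log (f x) ∂μ :=
        mul_le_mul_of_nonneg_left hjensen hμs.le
    _ = ∫ x in s, f x * log (f x) ∂μ := by
      rw [setAverage_eq, smul_eq_mul, ← mul_assoc, mul_inv_cancel₀ hμs.ne', one_mul]

theorem hasSum_setIntegral_of_iUnion_eq_univ {P : ℕ → Set α} (hPmeas : ∀ n, MeasurableSet (P n))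
    (hPdisj : Pairwise (Function.onFun Disjoint P)) (hPcover : ⋃ n, P n = univ)
    {f : α → ℝ} (hf : Integrable f μ) :
    HasSum (fun n => ∫ x in P n, f x ∂μ) (∫ x, f x ∂μ) := by
  have h := hasSum_integral_iUnion hPmeas hPdisj (by rw [hPcover]; exact hf.integrableOn)
  rwa [hPcover, setIntegral_univ] at h

theorem coarseGrain_eq_setAverage {P : ℕ → Set α} (hPdisj : Pairwise (Function.onFun Disjoint P))
    (f : α → ℝ) {n : ℕ} {x : α} (hx : x ∈ P n) :
    coarseGrain μ P f x = ⨍ y in P n, f y ∂μ := by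
  rw [coarseGrain, tsum_eq_single n, indicator_of_mem hx, setAverage_eq, smul_eq_mul,
    measureReal_def, div_eq_inv_mul]
  intro m hmn
  exact indicator_of_notMem (fun hxm => disjoint_left.1 (hPdisj hmn) hxm hx) _

theorem setIntegral_mul_log_coarseGrain {P : ℕ → Set α} (hPmeas : ∀ n, MeasurableSet (P n))
    (hPdisj : Pairwise (Function.onFun Disjoint P)) (f : α → ℝ) (n : ℕ) :
    ∫ x in P n, coarseGrain μ P f x * log (coarseGrain μ P f x) ∂μ
      = μ.real (P n) * ((⨍ y in P n, f y ∂μ) * log (⨍ y in P n, f y ∂μ)) := by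
  have hconst : EqOn (fun x => coarseGrain μ P f x * log (coarseGrain μ P f x))
      (fun _ => (⨍ y in P n, f y ∂μ) * log (⨍ y in P n, f y ∂μ)) (P n) := fun x hx => by
    simp only [coarseGrain_eq_setAverage hPdisj f hx]
  rw [setIntegral_congr_fun (hPmeas n) hconst, setIntegral_const, smul_eq_mul]

theorem gibbsEntropy_le_gibbsEntropy_coarseGrain {P : ℕ → Set α}
    (hPmeas : ∀ n, MeasurableSet (P n)) (hPdisj : Pairwise (Function.onFun Disjoint P))
    (hPcover : ⋃ n, P n = univ) (hPpos : ∀ n, 0 < μ (P n)) (hPfin : ∀ n, μ (P n) < ⊤)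
    {f : α → ℝ} (hf0 : ∀ᵐ x ∂μ, 0 ≤ f x) (hf : Integrable f μ)
    (hflog : Integrable (fun x => f x * log (f x)) μ)
    (hCflog : Integrable (fun x => coarseGrain μ P f x * log (coarseGrain μ P f x)) μ) :
    gibbsEntropy μ f ≤ gibbsEntropy μ (coarseGrain μ P f) := by
  have hsumC := hasSum_setIntegral_of_iUnion_eq_univ hPmeas hPdisj hPcover hCflog
  have hsumf := hasSum_setIntegral_of_iUnion_eq_univ hPmeas hPdisj hPcover hflog
  simp only [setIntegral_mul_log_coarseGrain hPmeas hPdisj] at hsumC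
  have hcell : ∀ n, μ.real (P n) * ((⨍ y in P n, f y ∂μ) * log (⨍ y in P n, f y ∂μ))
      ≤ ∫ x in P n, f x * log (f x) ∂μ := fun n =>
    measureReal_mul_mul_log_setAverage_le (hPpos n).ne' (hPfin n).ne
      (ae_restrict_of_ae hf0) hf.integrableOn hflog.integrableOn
  rw [gibbsEntropy, gibbsEntropy, neg_le_neg_iff]
  exact hasSum_le hcell hsumC hsumf

end

theorem second_law_locally_mixing_general {Ω : Type*} [MeasurableSpace Ω]
    (μ : Measure Ω)
    (P : ℕ → Set Ω) (hPmeas : ∀ n, MeasurableSet (P n))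
    (hPdisj : Pairwise (Function.onFun Disjoint P)) (hPcover : (⋃ n, P n) = Set.univ)
    (hPpos : ∀ n, 0 < μ (P n)) (hPfin : ∀ n, μ (P n) < ⊤)
    (U : ℕ → Ω ≃ᵐ Ω) (hU : ∀ k, MeasurePreserving (U k) μ μ)
    (f : ℕ → Ω → ℝ)
    (hf0 : ∀ k x, 0 ≤ f k x)
    (hfint : ∀ k, Integrable (f k) μ)
    (hevol : ∀ k, f (k + 1) = coarseGrain μ P (fun x => f k ((U k).symm x)))
    (hflog : ∀ k, Integrable (fun x => f k x * Real.log (f k x)) μ) :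
    ∀ k, gibbsEntropy μ (f k) ≤ gibbsEntropy μ (f (k + 1)) := by
  intro k
  have hUsymm : MeasurePreserving (U k).symm μ μ := (hU k).symm
  have hintegrable_comp {g : Ω → ℝ} (hg : Integrable g μ) :
      Integrable (fun x => g ((U k).symm x)) μ :=
    (hUsymm.integrable_comp_emb (U k).symm.measurableEmbedding).2 hg
  rw [← gibbsEntropy_comp_measurePreserving hUsymm, hevol k]
  exact gibbsEntropy_le_gibbsEntropy_coarseGrain hPmeas hPdisj hPcover hPpos hPfin
    (.of_forall fun x => hf0 k _) (hintegrable_comp (hfint k)) (hintegrable_comp (hflog k))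
    (hevol k ▸ hflog (k + 1))

/-- **Second Law of Thermodynamics** (Theorem 2, locally mixing dynamics): if probability
densities `f k` evolve by the local-mixing law `f (k+1) = C(f k ∘ (U k)⁻¹)` for
measure-preserving bijections `U k`, and the stated integrability/summability conditions
hold, then the coarse-grained Gibbs entropy is monotonically non-decreasing. -/
theorem second_law_locally_mixing {Ω : Type*} [MeasurableSpace Ω]
    (μ : Measure Ω) [SigmaFinite μ]
    (P : ℕ → Set Ω) (hPmeas : ∀ n, MeasurableSet (P n))
    (hPdisj : Pairwise (Function.onFun Disjoint P)) (hPcover : (⋃ n, P n) = Set.univ)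
    (hPpos : ∀ n, 0 < μ (P n)) (hPfin : ∀ n, μ (P n) < ⊤)
    (U : ℕ → Ω ≃ᵐ Ω) (hU : ∀ k, MeasurePreserving (U k) μ μ)
    (f : ℕ → Ω → ℝ)
    (hfmeas : ∀ k, Measurable (f k)) (hf0 : ∀ k x, 0 ≤ f k x)
    (hfint : ∀ k, Integrable (f k) μ) (hf1 : ∀ k, ∫ x, f k x ∂μ = 1)
    (hevol : ∀ k, f (k + 1) = coarseGrain μ P (fun x => f k ((U k).symm x)))
    (hflog : ∀ k, Integrable (fun x => f k x * Real.log (f k x)) μ)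
    (hsum : ∀ k, Summable (fun n =>
      |(∫ x in P n, f k x ∂μ) * Real.log ((∫ x in P n, f k x ∂μ) / (μ (P n)).toReal)|)) :
    ∀ k, gibbsEntropy μ (f k) ≤ gibbsEntropy μ (f (k + 1)) :=
  second_law_locally_mixing_general μ P hPmeas hPdisj hPcover hPpos hPfin U hU f hf0 hfint hevol
    hflog
end

section
/- Jarzynski equality for Hamiltonian (measure-preserving) dynamics: Let U be a measure-preserving bijection of (Ω, μ), let H₀, H₁ : Ω → ℝ be measurable, let β > 0, and assume the partition functions Z₀ = ∫_Ω e^{−βH₀} dμ and Z₁ = ∫_Ω e^{−βH₁} dμ are finite and positive. Define the work W(x) = H₁(U(x)) − H₀(x). Then the equilibrium average of e^{−βW} satisfies ∫_Ω e^{−βW(x)} · (e^{−βH₀(x)}/Z₀) dμ(x) = Z₁/Z₀ = e^{−β(F₁ − F₀)}, where F_i = −β⁻¹ log Z_i. -/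
open MeasureTheory Set

/-- **Jarzynski equality** for Hamiltonian (measure-preserving) dynamics: for a
measure-preserving bijection `U`, measurable Hamiltonians `H₀`, `H₁`, `β > 0` and
finite positive partition functions `Z₀`, `Z₁`, the equilibrium average of
`e^{−βW}` with `W(x) = H₁(U x) − H₀(x)` equals `Z₁/Z₀ = e^{−β(F₁ − F₀)}`,
where `Fᵢ = −β⁻¹ log Zᵢ`. -/
theorem jarzynski_equality {Ω : Type*} [MeasurableSpace Ω]
    (μ : Measure Ω) [SigmaFinite μ]
    (U : Ω ≃ᵐ Ω) (hU : MeasurePreserving U μ μ)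
    (H₀ H₁ : Ω → ℝ) (hH₀ : Measurable H₀) (hH₁ : Measurable H₁)
    (β : ℝ) (hβ : 0 < β)
    (Z₀ Z₁ : ℝ)
    (hZ₀def : Z₀ = ∫ x, Real.exp (-β * H₀ x) ∂μ)
    (hZ₁def : Z₁ = ∫ x, Real.exp (-β * H₁ x) ∂μ)
    (hint₀ : Integrable (fun x => Real.exp (-β * H₀ x)) μ)
    (hint₁ : Integrable (fun x => Real.exp (-β * H₁ x)) μ)
    (hZ₀pos : 0 < Z₀) (hZ₁pos : 0 < Z₁) :
    ∫ x, Real.exp (-β * (H₁ (U x) - H₀ x)) * (Real.exp (-β * H₀ x) / Z₀) ∂μ = Z₁ / Z₀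
      ∧ Z₁ / Z₀
        = Real.exp (-β * ((-β⁻¹ * Real.log Z₁) - (-β⁻¹ * Real.log Z₀))) := by
  constructor
  · have heq : ∀ x, Real.exp (-β * (H₁ (U x) - H₀ x)) * (Real.exp (-β * H₀ x) / Z₀)
        = Real.exp (-β * H₁ (U x)) / Z₀ := by
      intro x
      rw [mul_div_assoc', ← Real.exp_add]
      ring_nf
    simp only [heq]
    rw [integral_div, hU.integral_comp U.measurableEmbedding (fun x => Real.exp (-β * H₁ x)), ← hZ₁def]
  · rw [Real.exp_eq_exp.mpr (by ring : -β * ((-β⁻¹ * Real.log Z₁) - (-β⁻¹ * Real.log Z₀))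
        = β * β⁻¹ * Real.log Z₁ - β * β⁻¹ * Real.log Z₀),
      mul_inv_cancel₀ hβ.ne', one_mul, one_mul, Real.exp_sub,
      Real.exp_log hZ₁pos, Real.exp_log hZ₀pos]
end

section
/- Crooks Fluctuation Theorem for Hamiltonian dynamics: Let U and U* be measure-preserving bijections of (Ω, μ) and T a time reversal with U*(T(U(x))) = T(x) for all x. Let H₀, H₁ : Ω → ℝ be measurable with H₀ ∘ T = H₀ and H₁ ∘ T = H₁, let β > 0, and assume Z₀ = ∫ e^{−βH₀} dμ and Z₁ = ∫ e^{−βH₁} dμ are finite and positive. Define the forward work W_F(x) = H₁(U(x)) − H₀(x) and the backward work W_R(y) = H₀(U*(y)) − H₁(y). Then for every bounded measurable g : ℝ → ℝ, (1/Z₀) ∫_Ω g(W_F(x)) e^{−βW_F(x)} e^{−βH₀(x)} dμ(x) = (Z₁/Z₀) · (1/Z₁) ∫_Ω g(−W_R(y)) e^{−βH₁(y)} dμ(y); i.e., p_F(W) e^{−βW} = p_R(−W) e^{β(F₀ − F₁)} as distributions of work. -/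
open MeasureTheory Set

/-- **Crooks Fluctuation Theorem** for Hamiltonian dynamics: with forward work
`W_F(x) = H₁(U x) − H₀(x)` and backward work `W_R(y) = H₀(U* y) − H₁(y)`, for every
bounded measurable test function `g`,
`(1/Z₀) ∫ g(W_F) e^{−βW_F} e^{−βH₀} dμ = (Z₁/Z₀) (1/Z₁) ∫ g(−W_R) e^{−βH₁} dμ`;
i.e. `p_F(W) e^{−βW} = p_R(−W) e^{β(F₀ − F₁)}` as distributions of work. -/
theorem crooks_fluctuation_theorem {Ω : Type*} [MeasurableSpace Ω]
    (μ : Measure Ω) [SigmaFinite μ]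
    (U Ustar : Ω ≃ᵐ Ω) (hU : MeasurePreserving U μ μ)
    (hUstar : MeasurePreserving Ustar μ μ)
    (T : Ω → Ω) (hTmeas : Measurable T) (hT : MeasurePreserving T μ μ)
    (hTT : T ∘ T = id)
    (hrev : ∀ x, Ustar (T (U x)) = T x)
    (H₀ H₁ : Ω → ℝ) (hH₀ : Measurable H₀) (hH₁ : Measurable H₁)
    (hH₀T : H₀ ∘ T = H₀) (hH₁T : H₁ ∘ T = H₁)
    (β : ℝ) (hβ : 0 < β)
    (Z₀ Z₁ : ℝ)
    (hZ₀def : Z₀ = ∫ x, Real.exp (-β * H₀ x) ∂μ)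
    (hZ₁def : Z₁ = ∫ x, Real.exp (-β * H₁ x) ∂μ)
    (hint₀ : Integrable (fun x => Real.exp (-β * H₀ x)) μ)
    (hint₁ : Integrable (fun x => Real.exp (-β * H₁ x)) μ)
    (hZ₀pos : 0 < Z₀) (hZ₁pos : 0 < Z₁) :
    ∀ g : ℝ → ℝ, Measurable g → (∃ c, ∀ w, |g w| ≤ c) →
      (1 / Z₀) * ∫ x, g (H₁ (U x) - H₀ x)
          * Real.exp (-β * (H₁ (U x) - H₀ x)) * Real.exp (-β * H₀ x) ∂μ
        = (Z₁ / Z₀) * ((1 / Z₁) * ∫ y, g (-(H₀ (Ustar y) - H₁ y))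
            * Real.exp (-β * H₁ y) ∂μ) := by
  intro g hg hgbd
  have hZ₁ne : Z₁ ≠ 0 := ne_of_gt hZ₁pos
  -- T as a measurable equiv (it is an involution)
  let Te : Ω ≃ᵐ Ω := ⟨⟨T, T, congrFun hTT, congrFun hTT⟩, hTmeas, hTmeas⟩
  let V : Ω ≃ᵐ Ω := U.trans Te
  have hV : MeasurePreserving V μ μ := hT.comp hU
  -- The target integrand
  set F : Ω → ℝ := fun y => g (-(H₀ (Ustar y) - H₁ y)) * Real.exp (-β * H₁ y) with hF
  have key : ∀ x, g (H₁ (U x) - H₀ x)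
      * Real.exp (-β * (H₁ (U x) - H₀ x)) * Real.exp (-β * H₀ x) = F (V x) := by
    intro x
    have h1 : H₁ (T (U x)) = H₁ (U x) := congrFun hH₁T (U x)
    have h2 : H₀ (Ustar (T (U x))) = H₀ x := by
      rw [hrev x]; exact congrFun hH₀T x
    have hVx : V x = T (U x) := rfl
    rw [hF]
    simp only [hVx, h1, h2]
    rw [mul_assoc, ← Real.exp_add]
    ring_nf
  have hInt : (∫ x, g (H₁ (U x) - H₀ x)
      * Real.exp (-β * (H₁ (U x) - H₀ x)) * Real.exp (-β * H₀ x) ∂μ)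
      = ∫ y, F y ∂μ := by
    calc (∫ x, g (H₁ (U x) - H₀ x)
          * Real.exp (-β * (H₁ (U x) - H₀ x)) * Real.exp (-β * H₀ x) ∂μ)
        = ∫ x, F (V x) ∂μ := by
          exact integral_congr_ae (Filter.Eventually.of_forall key)
      _ = ∫ y, F y ∂μ := hV.integral_comp V.measurableEmbedding F
  rw [hInt]
  field_simp
end

section
/- Evans–Searles Fluctuation Theorem (symmetric protocol): Let U be a measure-preserving bijection of (Ω, μ) and T a time reversal with U(T(U(x))) = T(x) for all x (the protocol is its own time reverse). Let H : Ω → ℝ be measurable with H ∘ T = H, let β > 0, and assume Z = ∫ e^{−βH} dμ is finite and positive. Define the work W(x) = H(U(x)) − H(x). Then for every bounded measurable g : ℝ → ℝ, ∫_Ω g(W(x)) e^{−βW(x)} e^{−βH(x)}/Z dμ(x) = ∫_Ω g(−W(x)) e^{−βH(x)}/Z dμ(x); i.e., the equilibrium work distribution satisfies p(W) e^{−βW} = p(−W). -/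
open MeasureTheory Set

/-- **Evans–Searles Fluctuation Theorem** (symmetric protocol): for a measure-preserving
bijection `U` that is its own time reverse (`U (T (U x)) = T x`), a time-reversal
invariant Hamiltonian `H` with finite positive partition function `Z`, and work
`W(x) = H(U x) − H(x)`, the equilibrium work distribution satisfies
`p(W) e^{−βW} = p(−W)`: for every bounded measurable `g`,
`∫ g(W) e^{−βW} e^{−βH}/Z dμ = ∫ g(−W) e^{−βH}/Z dμ`. -/
theorem evans_searles_fluctuation_theorem {Ω : Type*} [MeasurableSpace Ω]
    (μ : Measure Ω) [SigmaFinite μ]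
    (U : Ω ≃ᵐ Ω) (hU : MeasurePreserving U μ μ)
    (T : Ω → Ω) (hTmeas : Measurable T) (hT : MeasurePreserving T μ μ)
    (hTT : T ∘ T = id)
    (hrev : ∀ x, U (T (U x)) = T x)
    (H : Ω → ℝ) (hH : Measurable H) (hHT : H ∘ T = H)
    (β : ℝ) (hβ : 0 < β)
    (Z : ℝ) (hZdef : Z = ∫ x, Real.exp (-β * H x) ∂μ)
    (hint : Integrable (fun x => Real.exp (-β * H x)) μ)
    (hZpos : 0 < Z) :
    ∀ g : ℝ → ℝ, Measurable g → (∃ c, ∀ w, |g w| ≤ c) →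
      ∫ x, g (H (U x) - H x) * Real.exp (-β * (H (U x) - H x))
          * (Real.exp (-β * H x) / Z) ∂μ
        = ∫ x, g (-(H (U x) - H x)) * (Real.exp (-β * H x) / Z) ∂μ := by

  intro g hg hb
  set Te : Ω ≃ᵐ Ω := ⟨⟨T, T, fun x => congrFun hTT x, fun x => congrFun hTT x⟩, hTmeas, hTmeas⟩
  set S : Ω ≃ᵐ Ω := U.trans Te
  have hS : MeasurePreserving S μ μ := hT.comp hU
  calc ∫ x, g (H (U x) - H x) * Real.exp (-β * (H (U x) - H x))
          * (Real.exp (-β * H x) / Z) ∂μ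
      = ∫ x, g (H (U (S x)) - H (S x)) * Real.exp (-β * (H (U (S x)) - H (S x)))
          * (Real.exp (-β * H (S x)) / Z) ∂μ :=
        (hS.integral_comp S.measurableEmbedding _).symm
    _ = ∫ x, g (-(H (U x) - H x)) * (Real.exp (-β * H x) / Z) ∂μ := by
        congr 1; funext x
        have h1 : H (S x) = H (U x) := congrFun hHT (U x)
        have h2 : H (U (S x)) = H x := by
          show H (U (T (U x))) = H x
          rw [hrev]; exact congrFun hHT x
        rw [h1, h2, show H x - H (U x) = -(H (U x) - H x) by ring, mul_assoc,
          mul_div_assoc', ← Real.exp_add]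
        ring_nf
end

section
/- Principle of Maximal Work (Theorem 4, equilibrium-start form): Let U be a measure-preserving bijection of (Ω, μ), H₀, H₁ : Ω → ℝ measurable, β > 0, with Z₀ = ∫ e^{−βH₀} dμ and Z₁ = ∫ e^{−βH₁} dμ finite and positive. Let W(x) = H₁(U(x)) − H₀(x), and assume W is integrable with respect to the equilibrium probability measure dν = (e^{−βH₀}/Z₀) dμ. Then the average work is at least the free energy change: ∫_Ω W dν ≥ F₁ − F₀ = −β⁻¹ log(Z₁/Z₀). -/
open MeasureTheory Set

/-- **Principle of Maximal Work** (Theorem 4, equilibrium-start form): with work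
`W(x) = H₁(U x) − H₀(x)` integrable with respect to the equilibrium measure
`dν = (e^{−βH₀}/Z₀) dμ`, the average work is at least the free energy change:
`∫ W dν ≥ F₁ − F₀ = −β⁻¹ log(Z₁/Z₀)`. -/
theorem principle_of_maximal_work {Ω : Type*} [MeasurableSpace Ω]
    (μ : Measure Ω) [SigmaFinite μ]
    (U : Ω ≃ᵐ Ω) (hU : MeasurePreserving U μ μ)
    (H₀ H₁ : Ω → ℝ) (hH₀ : Measurable H₀) (hH₁ : Measurable H₁)
    (β : ℝ) (hβ : 0 < β)
    (Z₀ Z₁ : ℝ)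
    (hZ₀def : Z₀ = ∫ x, Real.exp (-β * H₀ x) ∂μ)
    (hZ₁def : Z₁ = ∫ x, Real.exp (-β * H₁ x) ∂μ)
    (hint₀ : Integrable (fun x => Real.exp (-β * H₀ x)) μ)
    (hint₁ : Integrable (fun x => Real.exp (-β * H₁ x)) μ)
    (hZ₀pos : 0 < Z₀) (hZ₁pos : 0 < Z₁)
    (hWint : Integrable (fun x => (H₁ (U x) - H₀ x)
      * (Real.exp (-β * H₀ x) / Z₀)) μ) :
    ∫ x, (H₁ (U x) - H₀ x) * (Real.exp (-β * H₀ x) / Z₀) ∂μ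
      ≥ -β⁻¹ * Real.log (Z₁ / Z₀) := by
  set L : ℝ := Real.log (Z₁ / Z₀) with hL
  set I : ℝ := ∫ x, (H₁ (U x) - H₀ x) * (Real.exp (-β * H₀ x) / Z₀) ∂μ with hI
  -- integrability of exp(-β H₁ (U x))
  have hcomp : Integrable (fun x => Real.exp (-β * H₁ (U x))) μ :=
    (hU.integrable_comp_emb U.measurableEmbedding).mpr hint₁
  have hcomp' : Integrable (fun x => Real.exp (-β * H₁ (U x)) / Z₁) μ :=
    hcomp.div_const Z₁
  have hexpL : Real.exp (-L) = Z₀ / Z₁ := by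
    rw [hL, ← Real.log_inv, Real.exp_log]
    · rw [inv_div]
    · positivity
  -- pointwise inequality
  have hpt : ∀ x, (1 - L) * (Real.exp (-β * H₀ x) / Z₀)
      - β * ((H₁ (U x) - H₀ x) * (Real.exp (-β * H₀ x) / Z₀))
      ≤ Real.exp (-β * H₁ (U x)) / Z₁ := by
    intro x
    have h1 : (-β * (H₁ (U x) - H₀ x) - L) + 1
        ≤ Real.exp (-β * (H₁ (U x) - H₀ x) - L) :=
      Real.add_one_le_exp _
    have hρ : 0 ≤ Real.exp (-β * H₀ x) / Z₀ := by positivity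
    have h2 := mul_le_mul_of_nonneg_right h1 hρ
    have h3 : Real.exp (-β * (H₁ (U x) - H₀ x) - L) * (Real.exp (-β * H₀ x) / Z₀)
        = Real.exp (-β * H₁ (U x)) / Z₁ := by
      rw [show -β * (H₁ (U x) - H₀ x) - L = (-β * H₁ (U x)) + (β * H₀ x) + (-L) by ring,
        Real.exp_add, Real.exp_add, hexpL]
      rw [show -β * H₀ x = -(β * H₀ x) by ring, Real.exp_neg]
      field_simp
    rw [h3] at h2
    nlinarith [h2]
  -- integrability of LHS of hpt
  have hρint : Integrable (fun x => Real.exp (-β * H₀ x) / Z₀) μ := hint₀.div_const Z₀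
  have hlhsint : Integrable (fun x => (1 - L) * (Real.exp (-β * H₀ x) / Z₀)
      - β * ((H₁ (U x) - H₀ x) * (Real.exp (-β * H₀ x) / Z₀))) μ :=
    (hρint.const_mul _).sub (hWint.const_mul _)
  have hmono := integral_mono hlhsint hcomp' hpt
  -- compute integrals
  have hIρ : ∫ x, Real.exp (-β * H₀ x) / Z₀ ∂μ = 1 := by
    rw [integral_div, ← hZ₀def, div_self hZ₀pos.ne']
  have hI₁ : ∫ x, Real.exp (-β * H₁ (U x)) / Z₁ ∂μ = 1 := by
    rw [integral_div]
    have : ∫ x, Real.exp (-β * H₁ (U x)) ∂μ = ∫ x, Real.exp (-β * H₁ x) ∂μ :=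
      hU.integral_comp U.measurableEmbedding (fun x => Real.exp (-β * H₁ x))
    rw [this, ← hZ₁def, div_self hZ₁pos.ne']
  have hsplit : ∫ x, ((1 - L) * (Real.exp (-β * H₀ x) / Z₀)
      - β * ((H₁ (U x) - H₀ x) * (Real.exp (-β * H₀ x) / Z₀))) ∂μ
      = (1 - L) * 1 - β * I := by
    rw [integral_sub (hρint.const_mul _) (hWint.const_mul _),
      integral_const_mul, integral_const_mul, hIρ, hI]
  rw [hsplit, hI₁] at hmono
  -- conclude
  have hβI : -L ≤ β * I := by linarith
  have h5 : β⁻¹ * (β * I + L) = I + β⁻¹ * L := by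
    field_simp
  have h6 : 0 ≤ β⁻¹ * (β * I + L) := mul_nonneg (by positivity) (by linarith)
  rw [h5] at h6
  rw [ge_iff_le]
  linarith
end

section
/- Principle of Minimal Free Energy (Theorem 5, Markov form): Let S be a countable set, Φ : S → ℝ, β > 0, with Z = Σ_{A∈S} e^{−βΦ(A)} finite. Let P, Q : S × S → [0,1] satisfy Σ_{B∈S} P(B|A) = 1 for every A, Σ_{A∈S} Q(A|B) = 1 for every B, and the generalized detailed-balance relation P(B|A) e^{−βΦ(A)} = Q(A|B) e^{−βΦ(B)} for all A, B. Let p be a probability mass function on S and p'(B) = Σ_{A∈S} P(B|A) p(A). Assuming the sums Σ_A |p(A)(Φ(A) + β⁻¹ log p(A))| and Σ_B |p'(B)(Φ(B) + β⁻¹ log p'(B))| converge, the coarse-grained free energy F[p] = Σ_{A∈S} p(A)(Φ(A) + β⁻¹ log p(A)) is non-increasing: F[p'] ≤ F[p]. -/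
/-!
With the Boltzmann weights `π A = e^{-βΦ(A)}`, the free energy is `β⁻¹ D(p ‖ π)` for the
relative entropy `D(p ‖ π) = Σ_A p(A) log (p(A) / π(A))`. Detailed balance together with the
normalisation of `Q` says that `P` maps `π` to itself, so `p ↦ p'` is a Markov map fixing `π`, and
relative entropy does not increase under such maps (data-processing inequality). The latter follows
by applying the log-sum inequality to `B ↦ Σ_A P(B|A) p(A)` for each `B` and exchanging the sums.
-/

open Real

noncomputable def relEntropy {ι : Type*} (p q : ι → ℝ) : ℝ :=
  ∑' i, p i * (log (p i) - log (q i))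

lemma mul_log_mul_sub_log_mul (w x : ℝ) {y : ℝ} (hy : y ≠ 0) :
    w * x * (log (w * x) - log (w * y)) = w * (x * (log x - log y)) := by
  rcases eq_or_ne w 0 with rfl | hw
  · simp
  rcases eq_or_ne x 0 with rfl | hx
  · simp
  rw [log_mul hw hx, log_mul hw hy]
  ring

/-- The tangent line of `a ↦ a log (a / b)` at `a = t b`. -/
lemma mul_log_add_one_sub_mul_le {a b t : ℝ} (ha : 0 ≤ a) (hb : 0 ≤ b) (ht : 0 < t)
    (hab : b = 0 → a = 0) :
    a * (log t + 1) - t * b ≤ a * (log a - log b) := by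
  rcases ha.eq_or_lt with rfl | ha
  · nlinarith
  have hb : 0 < b := hb.lt_of_ne fun h => ha.ne' (hab h.symm)
  have key : log (t * b / a) ≤ t * b / a - 1 := log_le_sub_one_of_pos (by positivity)
  rw [log_div (by positivity) ha.ne', log_mul ht.ne' hb.ne'] at key
  have hcancel : a * (t * b / a - 1) = t * b - a := by field_simp
  have := mul_le_mul_of_nonneg_left key ha.le
  rw [hcancel] at this
  linarith

/-- The log-sum inequality. -/
theorem mul_log_sub_log_le_tsum {ι : Type*} {a b : ι → ℝ} {α γ : ℝ}
    (ha : ∀ i, 0 ≤ a i) (hb : ∀ i, 0 ≤ b i) (hab : ∀ i, b i = 0 → a i = 0)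
    (hα : HasSum a α) (hγ : HasSum b γ) (hγ0 : 0 < γ)
    (hs : Summable fun i => a i * (log (a i) - log (b i))) :
    α * (log α - log γ) ≤ ∑' i, a i * (log (a i) - log (b i)) := by
  rcases (hα.nonneg ha).eq_or_lt with rfl | hα0
  · have : a = 0 := (hasSum_zero_iff_of_nonneg ha).mp hα
    simp [this]
  set t := α / γ
  have ht : 0 < t := div_pos hα0 hγ0
  have htγ : t * γ = α := div_mul_cancel₀ α hγ0.ne'
  have hsum : HasSum (fun i => a i * (log t + 1) - t * b i) (α * (log t + 1) - t * γ) :=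
    (hα.mul_right _).sub (hγ.mul_left t)
  have := hasSum_le (fun i => mul_log_add_one_sub_mul_le (ha i) (hb i) ht (hab i)) hsum
    hs.hasSum
  rw [htγ, log_div hα0.ne' hγ0.ne'] at this
  linarith

/-- The data-processing inequality; `K j i` is the transition probability from `i` to `j`. -/
theorem relEntropy_le_of_markov {ι κ : Type*} (K : κ → ι → ℝ) (hK0 : ∀ j i, 0 ≤ K j i)
    (hK1 : ∀ i, HasSum (fun j => K j i) 1) {p q : ι → ℝ} {p' q' : κ → ℝ}
    (hp : ∀ i, 0 ≤ p i) (hq : ∀ i, 0 < q i) (hq' : ∀ j, 0 < q' j)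
    (hKp : ∀ j, HasSum (fun i => K j i * p i) (p' j))
    (hKq : ∀ j, HasSum (fun i => K j i * q i) (q' j))
    (hD : Summable fun i => p i * (log (p i) - log (q i)))
    (hD' : Summable fun j => p' j * (log (p' j) - log (q' j))) :
    relEntropy p' q' ≤ relEntropy p q := by
  set c := fun i => p i * (log (p i) - log (q i))
  set φ : ι → κ → ℝ := fun i j => K j i * c i
  have hrow : ∀ i (d : ℝ), HasSum (fun j => K j i * d) d := fun i d => by
    simpa using (hK1 i).mul_right d
  have hφ : Summable (Function.uncurry φ) := by
    refine summable_abs_iff.mp <| (summable_prod_of_nonneg fun _ => abs_nonneg _).mpr ⟨?_, ?_⟩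
    · intro i
      simpa [φ, abs_mul, abs_of_nonneg (hK0 _ i)] using (hrow i |c i|).summable
    · simpa [φ, abs_mul, abs_of_nonneg (hK0 _ _), (hrow _ _).tsum_eq] using hD.abs
  have hcol : ∀ j, p' j * (log (p' j) - log (q' j)) ≤ ∑' i, φ i j := by
    intro j
    have hterm : ∀ i, K j i * p i * (log (K j i * p i) - log (K j i * q i)) = φ i j :=
      fun i => mul_log_mul_sub_log_mul _ _ (hq i).ne'
    rw [← tsum_congr hterm]
    refine mul_log_sub_log_le_tsum (fun i => mul_nonneg (hK0 j i) (hp i))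
      (fun i => mul_nonneg (hK0 j i) (hq i).le) (fun i h => ?_) (hKp j) (hKq j) (hq' j) ?_
    · rw [(mul_eq_zero_iff_right (hq i).ne').mp h, zero_mul]
    · exact (hφ.prod_symm.prod_factor j).congr fun i => (hterm i).symm
  calc relEntropy p' q' ≤ ∑' j, ∑' i, φ i j := hD'.tsum_le_tsum hcol hφ.prod_symm.prod
    _ = ∑' i, ∑' j, φ i j := hφ.tsum_comm
    _ = relEntropy p q := tsum_congr fun i => (hrow i (c i)).tsum_eq

lemma mul_add_inv_mul_log_eq {β : ℝ} (hβ : β ≠ 0) (x Φ : ℝ) :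
    x * (Φ + β⁻¹ * log x) = β⁻¹ * (x * (log x - log (exp (-β * Φ)))) := by
  rw [log_exp]
  field_simp
  ring

theorem principle_of_minimal_free_energy_general {S : Type*}
    (Φ : S → ℝ) (β : ℝ) (hβ : 0 < β)
    (P Q : S → S → ℝ)
    (hP0 : ∀ B A, 0 ≤ P B A) (hP1 : ∀ B A, P B A ≤ 1)
    (hProw : ∀ A, HasSum (fun B => P B A) 1)
    (hQrow : ∀ B, HasSum (fun A => Q A B) 1)
    (hdb : ∀ A B, P B A * Real.exp (-β * Φ A) = Q A B * Real.exp (-β * Φ B))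
    (p : S → ℝ) (hp0 : ∀ A, 0 ≤ p A) (hpsum : HasSum p 1)
    (p' : S → ℝ) (hp'def : ∀ B, p' B = ∑' A, P B A * p A)
    (hsum : Summable (fun A => |p A * (Φ A + β⁻¹ * Real.log (p A))|))
    (hsum' : Summable (fun B => |p' B * (Φ B + β⁻¹ * Real.log (p' B))|)) :
    ∑' B, p' B * (Φ B + β⁻¹ * Real.log (p' B))
      ≤ ∑' A, p A * (Φ A + β⁻¹ * Real.log (p A)) := by
  set w : S → ℝ := fun A => exp (-β * Φ A)
  have hfree : ∀ r : S → ℝ, (fun A => r A * (Φ A + β⁻¹ * log (r A))) =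
      fun A => β⁻¹ * (r A * (log (r A) - log (w A))) :=
    fun r => funext fun A => mul_add_inv_mul_log_eq hβ.ne' (r A) (Φ A)
  have hD : ∀ r : S → ℝ, Summable (fun A => |r A * (Φ A + β⁻¹ * log (r A))|) →
      Summable fun A => r A * (log (r A) - log (w A)) := fun r h =>
    (summable_mul_left_iff (inv_ne_zero hβ.ne')).mp (hfree r ▸ summable_abs_iff.mp h)
  have hw_fixed : ∀ B, HasSum (fun A => P B A * w A) (w B) := fun B => by
    rw [show (fun A => P B A * w A) = fun A => Q A B * w B from funext fun A => hdb A B]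
    simpa using (hQrow B).mul_right (w B)
  have hp' : ∀ B, HasSum (fun A => P B A * p A) (p' B) := fun B => by
    rw [hp'def]
    refine (hpsum.summable.of_nonneg_of_le (fun A => mul_nonneg (hP0 B A) (hp0 A))
      fun A => ?_).hasSum
    exact mul_le_of_le_one_left (hp0 A) (hP1 B A)
  rw [hfree, hfree, tsum_mul_left, tsum_mul_left]
  exact mul_le_mul_of_nonneg_left (relEntropy_le_of_markov P hP0 hProw hp0 (fun A => exp_pos _)
    (fun B => exp_pos _) hp' hw_fixed (hD p hsum) (hD p' hsum')) (inv_nonneg.mpr hβ.le)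

/-- **Principle of Minimal Free Energy** (Theorem 5, Markov form): on a countable set `S`
of Boltzmann macro-states with Boltzmann free energies `Φ`, inverse temperature `β > 0`,
finite partition sum `Σ_A e^{−βΦ(A)}`, forward/backward transition probabilities `P`, `Q`
satisfying the generalized detailed-balance relation
`P(B|A) e^{−βΦ(A)} = Q(A|B) e^{−βΦ(B)}`, the coarse-grained free energy
`F[p] = Σ_A p(A)(Φ(A) + β⁻¹ log p(A))` does not increase under one Markov step:
`F[p'] ≤ F[p]` with `p'(B) = Σ_A P(B|A) p(A)`. Here `P B A` denotes `P(B|A)` and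
`Q A B` denotes `Q(A|B)`. -/
theorem principle_of_minimal_free_energy {S : Type*} [Countable S]
    (Φ : S → ℝ) (β : ℝ) (hβ : 0 < β)
    (hZ : Summable (fun A => Real.exp (-β * Φ A)))
    (P Q : S → S → ℝ)
    (hP0 : ∀ B A, 0 ≤ P B A) (hP1 : ∀ B A, P B A ≤ 1)
    (hQ0 : ∀ A B, 0 ≤ Q A B) (hQ1 : ∀ A B, Q A B ≤ 1)
    (hProw : ∀ A, HasSum (fun B => P B A) 1)
    (hQrow : ∀ B, HasSum (fun A => Q A B) 1)
    (hdb : ∀ A B, P B A * Real.exp (-β * Φ A) = Q A B * Real.exp (-β * Φ B))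
    (p : S → ℝ) (hp0 : ∀ A, 0 ≤ p A) (hp1 : ∀ A, p A ≤ 1) (hpsum : HasSum p 1)
    (p' : S → ℝ) (hp'def : ∀ B, p' B = ∑' A, P B A * p A)
    (hsum : Summable (fun A => |p A * (Φ A + β⁻¹ * Real.log (p A))|))
    (hsum' : Summable (fun B => |p' B * (Φ B + β⁻¹ * Real.log (p' B))|)) :
    ∑' B, p' B * (Φ B + β⁻¹ * Real.log (p' B))
      ≤ ∑' A, p A * (Φ A + β⁻¹ * Real.log (p A)) :=
  principle_of_minimal_free_energy_general Φ β hβ P Q hP0 hP1 hProw hQrow hdb p hp0 hpsum p' hp'def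
    hsum hsum'
end

section
/- Discrete second law for volume-compatible Markov transitions: Let S be a countable set with weights m : S → (0, ∞). Let P : S × S → [0,1] satisfy Σ_{B∈S} P(B|A) = 1 for every A and Σ_{A∈S} m(A) P(B|A) = m(B) for every B. Let p be a probability mass function on S and p'(B) = Σ_{A∈S} P(B|A) p(A). Assuming Σ_A |p(A) log(p(A)/m(A))| and Σ_B |p'(B) log(p'(B)/m(B))| converge, the coarse-grained entropy S[p] = Σ_{A∈S} p(A) log(m(A)/p(A)) is non-decreasing: S[p'] ≥ S[p]. -/
/-- Discrete second law for volume-compatible Markov transitions: on a countable set `S`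
with positive weights `m`, if `P` is row-stochastic (`Σ_B P(B|A) = 1`) and preserves the
weights (`Σ_A m(A) P(B|A) = m(B)`), then the coarse-grained entropy
`S[p] = Σ_A p(A) log(m(A)/p(A))` does not decrease under one Markov step:
`S[p'] ≥ S[p]` with `p'(B) = Σ_A P(B|A) p(A)`. Here `P B A` denotes `P(B|A)`. -/
theorem discrete_second_law {S : Type*} [Countable S]
    (m : S → ℝ) (hm : ∀ A, 0 < m A)
    (P : S → S → ℝ)
    (hP0 : ∀ B A, 0 ≤ P B A) (hP1 : ∀ B A, P B A ≤ 1)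
    (hProw : ∀ A, HasSum (fun B => P B A) 1)
    (hPm : ∀ B, HasSum (fun A => m A * P B A) (m B))
    (p : S → ℝ) (hp0 : ∀ A, 0 ≤ p A) (hp1 : ∀ A, p A ≤ 1) (hpsum : HasSum p 1)
    (p' : S → ℝ) (hp'def : ∀ B, p' B = ∑' A, P B A * p A)
    (hsum : Summable (fun A => |p A * Real.log (p A / m A)|))
    (hsum' : Summable (fun B => |p' B * Real.log (p' B / m B)|)) :
    ∑' A, p A * Real.log (m A / p A) ≤ ∑' B, p' B * Real.log (m B / p' B) := by
  classical
  set q : S → ℝ := fun A => p A * Real.log (p A / m A) with hq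
  have hqs : Summable q := summable_abs_iff.mp hsum
  -- Summability of P B · * p
  have hPpS : ∀ B, Summable (fun A => P B A * p A) := by
    intro B
    refine Summable.of_nonneg_of_le (fun A => mul_nonneg (hP0 B A) (hp0 A))
      (fun A => ?_) hpsum.summable
    calc P B A * p A ≤ 1 * p A := mul_le_mul_of_nonneg_right (hP1 B A) (hp0 A)
    _ = p A := one_mul _
  have hPp : ∀ B, HasSum (fun A => P B A * p A) (p' B) := by
    intro B; rw [hp'def B]; exact (hPpS B).hasSum
  have hp'0 : ∀ B, 0 ≤ p' B := by
    intro B; rw [hp'def B]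
    exact tsum_nonneg fun A => mul_nonneg (hP0 B A) (hp0 A)
  -- Summability of P B · * q
  have hFS : ∀ B, Summable (fun A => P B A * q A) := by
    intro B
    refine summable_abs_iff.mp (Summable.of_nonneg_of_le (fun A => abs_nonneg _)
      (fun A => ?_) hsum)
    rw [abs_mul, abs_of_nonneg (hP0 B A)]
    calc P B A * |q A| ≤ 1 * |q A| := mul_le_mul_of_nonneg_right (hP1 B A) (abs_nonneg _)
    _ = |q A| := one_mul _
  -- key pointwise (log-sum) inequality
  have key : ∀ B, p' B * Real.log (p' B / m B) ≤ ∑' A, P B A * q A := by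
    intro B
    rcases eq_or_lt_of_le (hp'0 B) with h0 | hpos
    · have hz : ∀ A, P B A * p A = 0 := by
        intro A
        have := (hasSum_zero_iff_of_nonneg (fun A => mul_nonneg (hP0 B A) (hp0 A))).mp
          (h0 ▸ hPp B)
        exact congrFun this A
      have : ∀ A, P B A * q A = 0 := by
        intro A
        have : P B A * q A = (P B A * p A) * Real.log (p A / m A) := by ring
        rw [this, hz A, zero_mul]
      rw [tsum_congr this, tsum_zero, ← h0, zero_mul]
    · set c : ℝ := p' B / m B with hc
      have hcpos : 0 < c := div_pos hpos (hm B)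
      -- pointwise minorant
      have hpt : ∀ A, P B A * p A * Real.log c + (P B A * p A - c * (m A * P B A))
          ≤ P B A * q A := by
        intro A
        have hqA : P B A * q A = (P B A * p A) * Real.log (p A / m A) := by ring
        rcases eq_or_lt_of_le (mul_nonneg (hP0 B A) (hp0 A)) with h0 | hpos'
        · rw [hqA, ← h0]
          have : 0 ≤ c * (m A * P B A) :=
            mul_nonneg hcpos.le (mul_nonneg (hm A).le (hP0 B A))
          simp only [← h0, zero_mul, zero_add, zero_sub, neg_mul]
          linarith
        · have hpA : 0 < p A := by
            rcases (hp0 A).lt_or_eq with h | h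
            · exact h
            · exfalso; rw [← h, mul_zero] at hpos'; exact lt_irrefl 0 hpos'
          have hPBA : 0 < P B A := by
            rcases (hP0 B A).lt_or_eq with h | h
            · exact h
            · exfalso; rw [← h, zero_mul] at hpos'; exact lt_irrefl 0 hpos'
          have harg : 0 < m A * c / p A := div_pos (mul_pos (hm A) hcpos) hpA
          have hlog := Real.log_le_sub_one_of_pos harg
          have hlogeq : Real.log (m A * c / p A) = Real.log c - Real.log (p A / m A) := by
            rw [Real.log_div (mul_pos (hm A) hcpos).ne' hpA.ne', Real.log_mul (hm A).ne' hcpos.ne',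
              Real.log_div hpA.ne' (hm A).ne']
            ring
          rw [hlogeq] at hlog
          -- log c - log(p/m) ≤ m*c/p - 1 ; multiply by P*p > 0
          have := mul_le_mul_of_nonneg_left hlog hpos'.le
          rw [hqA]
          have heq : P B A * p A * (m A * c / p A - 1) = c * (m A * P B A) - P B A * p A := by
            field_simp
          nlinarith [this]
      -- HasSum of minorant
      have hmin : HasSum (fun A => P B A * p A * Real.log c + (P B A * p A - c * (m A * P B A)))
          (p' B * Real.log c + (p' B - c * m B)) :=
        ((hPp B).mul_right (Real.log c)).add ((hPp B).sub ((hPm B).mul_left c))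
      have hle := hasSum_le hpt hmin (hFS B).hasSum
      have : p' B - c * m B = 0 := by
        rw [hc, div_mul_cancel₀ _ (hm B).ne', sub_self]
      rw [this, add_zero] at hle
      exact hle
  -- Now sum over B.  First: for nonneg summable g, the marginals behave.
  have marg : ∀ g : S → ℝ, (∀ A, 0 ≤ g A) → Summable g →
      Summable (fun B => ∑' A, P B A * g A) ∧
        (∑' B, ∑' A, P B A * g A) = ∑' A, g A := by
    intro g hg0 hgs
    have hne : ∀ x : S × S, 0 ≤ P x.2 x.1 * g x.1 := fun x =>
      mul_nonneg (hP0 _ _) (hg0 _)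
    have hslice : ∀ A, HasSum (fun B => P B A * g A) (g A) := by
      intro A
      simpa [mul_comm] using (hProw A).mul_left (g A)
    have hprod : Summable (fun x : S × S => P x.2 x.1 * g x.1) := by
      refine (summable_prod_of_nonneg hne).mpr ⟨fun A => (hslice A).summable, ?_⟩
      have : (fun A => ∑' B, P B A * g A) = g := by
        funext A; exact (hslice A).tsum_eq
      rw [this]; exact hgs
    have hswap : Summable (fun x : S × S => P x.1 x.2 * g x.2) := by
      have := hprod.prod_symm
      simpa [Prod.swap] using this
    have hmarg := (summable_prod_of_nonneg (f := fun x : S × S => P x.1 x.2 * g x.2)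
      (fun x => mul_nonneg (hP0 _ _) (hg0 _))).mp hswap
    refine ⟨hmarg.2, ?_⟩
    calc ∑' B, ∑' A, P B A * g A = ∑' x : S × S, P x.1 x.2 * g x.2 :=
          (Summable.tsum_prod' hswap hmarg.1).symm
      _ = ∑' x : S × S, P x.2 x.1 * g x.1 := ((Equiv.prodComm S S).tsum_eq _).symm
      _ = ∑' A, ∑' B, P B A * g A := Summable.tsum_prod' hprod (fun A => (hslice A).summable)
      _ = ∑' A, g A := by exact tsum_congr fun A => (hslice A).tsum_eq
  -- split q into positive and negative parts
  set qp : S → ℝ := fun A => max (q A) 0 with hqp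
  set qn : S → ℝ := fun A => max (-q A) 0 with hqn
  have hqpn : ∀ A, q A = qp A - qn A := by
    intro A; simp [hqp, hqn, max_def]; split_ifs <;> linarith
  have hqps : Summable qp := by
    refine Summable.of_nonneg_of_le (fun A => le_max_right _ _) (fun A => ?_) hsum
    exact max_le (le_abs_self _) (abs_nonneg _)
  have hqns : Summable qn := by
    refine Summable.of_nonneg_of_le (fun A => le_max_right _ _) (fun A => ?_) hsum
    exact max_le (neg_le_abs _) (abs_nonneg _)
  obtain ⟨hps, hpe⟩ := marg qp (fun A => le_max_right _ _) hqps
  obtain ⟨hns, hne⟩ := marg qn (fun A => le_max_right _ _) hqns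
  have hsplit : ∀ B, (∑' A, P B A * q A)
      = (∑' A, P B A * qp A) - (∑' A, P B A * qn A) := by
    intro B
    have hqpS : Summable fun A => P B A * qp A := by
      refine Summable.of_nonneg_of_le (fun A => mul_nonneg (hP0 _ _) (le_max_right _ _))
        (fun A => ?_) hqps
      calc P B A * qp A ≤ 1 * qp A :=
          mul_le_mul_of_nonneg_right (hP1 B A) (le_max_right _ _)
        _ = qp A := one_mul _
    have hqnS : Summable fun A => P B A * qn A := by
      refine Summable.of_nonneg_of_le (fun A => mul_nonneg (hP0 _ _) (le_max_right _ _))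
        (fun A => ?_) hqns
      calc P B A * qn A ≤ 1 * qn A :=
          mul_le_mul_of_nonneg_right (hP1 B A) (le_max_right _ _)
        _ = qn A := one_mul _
    rw [← Summable.tsum_sub hqpS hqnS]
    exact tsum_congr fun A => by rw [hqpn A]; ring
  have hfS : Summable (fun B => ∑' A, P B A * q A) := by
    rw [show (fun B => ∑' A, P B A * q A)
      = fun B => (∑' A, P B A * qp A) - (∑' A, P B A * qn A) from funext hsplit]
    exact hps.sub hns
  have hfE : (∑' B, ∑' A, P B A * q A) = ∑' A, q A := by
    rw [tsum_congr hsplit, Summable.tsum_sub hps hns, hpe, hne]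
    rw [← Summable.tsum_sub hqps hqns]
    exact tsum_congr fun A => (hqpn A).symm
  -- sum key over B
  have hq's : Summable (fun B => p' B * Real.log (p' B / m B)) := summable_abs_iff.mp hsum'
  have main : (∑' B, p' B * Real.log (p' B / m B)) ≤ ∑' A, q A := by
    rw [← hfE]; exact Summable.tsum_le_tsum key hq's hfS
  -- rewrite goal
  have hflip : ∀ (r : S → ℝ), (∀ A, 0 ≤ r A) →
      (fun A => r A * Real.log (m A / r A)) = fun A => -(r A * Real.log (r A / m A)) := by
    intro r hr
    funext A
    rcases (hr A).lt_or_eq with h | h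
    · rw [Real.log_div (hm A).ne' h.ne', Real.log_div h.ne' (hm A).ne']
      ring
    · rw [← h]; ring
  rw [tsum_congr (fun A => congrFun (hflip p hp0) A),
    tsum_congr (fun B => congrFun (hflip p' hp'0) B), tsum_neg, tsum_neg]
  exact neg_le_neg main
end
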